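/- For every μ ∈ G_1, χ_μ = θ_μ ∘ Φ, where χ_μ is the character of Y^(1) associated to μ, θ_μ is the character of Sym associated to μ via the S-transform, and Φ: Y^(1) → Sym is the unital algebra homomorphism with Φ(Y_n) = y_n. -/

import Mathlib

open scoped TensorProduct

noncomputable section

namespace FreeProb

attribute [local instance] Classical.propDecidable

/-! ### Non-crossing partitions of `{1,…,n}`, modelled as setoids on `Fin n` -/

/-- The partition `0_n` of `Fin n` into singletons. -/
def botS (n : ℕ) : Setoid (Fin n) := ⟨Eq, eq_equivalence⟩

/-- The partition `1_n` of `Fin n` with a single block. -/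
def topS (n : ℕ) : Setoid (Fin n) :=
  ⟨fun _ _ => True, ⟨fun _ => trivial, fun _ => trivial, fun _ _ => trivial⟩⟩

/-- A partition is non-crossing if there is no crossing `a < b < c < d` with
`a ∼ c`, `b ∼ d` lying in different blocks. -/
def IsNC {n : ℕ} (s : Setoid (Fin n)) : Prop :=
  ∀ a b c d : Fin n, a < b → b < c → c < d → s.r a c → s.r b d → s.r a b

/-- The lattice `NC(n)` of non-crossing partitions, ordered by reversed refinement
(the order inherited from the lattice of setoids). -/
abbrev NC (n : ℕ) := {s : Setoid (Fin n) // IsNC s}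

instance (n : ℕ) : Finite (Setoid (Fin n)) :=
  Finite.of_injective (fun s => s.r) (by intro s t h; cases s; cases t; cases h; rfl)

noncomputable instance (n : ℕ) : Fintype (Setoid (Fin n)) := Fintype.ofFinite _

noncomputable instance (n : ℕ) : Fintype (NC n) := Fintype.ofFinite _

/-- `0_n` as a non-crossing partition. -/
def ncBot (n : ℕ) : NC n :=
  ⟨botS n, by
    intro a b c d h1 h2 h3 hac _
    have hac' : a = c := hac
    subst hac'
    exact absurd (h1.trans h2) (lt_irrefl _)⟩

/-- `1_n` as a non-crossing partition. -/
def ncTop (n : ℕ) : NC n := ⟨topS n, fun _ _ _ _ _ _ _ _ _ => trivial⟩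

/-- The blocks of a partition, as a finset of finsets. -/
def blocks {n : ℕ} (s : Setoid (Fin n)) : Finset (Finset (Fin n)) :=
  Finset.univ.image fun a => Finset.univ.filter fun b => s.r a b

/-- The next element of the block of `b`, in increasing cyclic order. -/
def nextFun {n : ℕ} (s : Setoid (Fin n)) (b : Fin n) : Fin n :=
  let B : Finset (Fin n) := Finset.univ.filter fun a => s.r b a
  let A : Finset (Fin n) := B.filter fun a => b < a
  if h : A.Nonempty then A.min' h
  else B.min' ⟨b, Finset.mem_filter.mpr ⟨Finset.mem_univ b, s.iseqv.refl b⟩⟩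

/-- The permutation `P_π` associated to a partition `π`: its cycles are the blocks
of `π`, traversed in increasing order.  (The function `nextFun` is indeed bijective,
so the `dite` below always takes its first branch.) -/
def permOf {n : ℕ} (s : Setoid (Fin n)) : Equiv.Perm (Fin n) :=
  if h : Function.Bijective (nextFun s) then Equiv.ofBijective _ h else 1

/-- The partition of `Fin n` into the cycles (orbits) of a permutation. -/
def cycleSetoid {n : ℕ} (σ : Equiv.Perm (Fin n)) : Setoid (Fin n) :=
  ⟨σ.SameCycle, ⟨fun x => Equiv.Perm.SameCycle.refl σ x, fun h => h.symm, fun h h' => h.trans h'⟩⟩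

/-- The Kreweras complement `K(π)`, determined by `P_{K(π)} = P_π⁻¹ * P_{1_n}`. -/
def kreweras {n : ℕ} (s : Setoid (Fin n)) : Setoid (Fin n) :=
  cycleSetoid ((permOf s)⁻¹ * permOf (topS n))

/-- The relative Kreweras complement `K_t(s)`, determined by `P_{K_t(s)} = P_s⁻¹ * P_t`. -/
def relKreweras {n : ℕ} (s t : Setoid (Fin n)) : Setoid (Fin n) :=
  cycleSetoid ((permOf s)⁻¹ * permOf t)

/-! ### Words, and the Hopf algebra `Y^(k)` -/

/-- Words over the alphabet `{1,…,k}`, encoded as pairs `⟨n, w⟩` with `w : Fin n → Fin k`. -/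
abbrev WordIdx (k : ℕ) := Σ n : ℕ, Fin n → Fin k

/-- The commutative polynomial algebra `Y^(k) = ℂ[Y_w : |w| ≥ 2]`. -/
abbrev Yalg (k : ℕ) := MvPolynomial {p : WordIdx k // 2 ≤ p.1} ℂ

/-- The generator `Y_w`, with the convention `Y_w = 1` for `|w| ≤ 1`. -/
def Ygen {k : ℕ} (p : WordIdx k) : Yalg k :=
  if h : 2 ≤ p.1 then MvPolynomial.X ⟨p, h⟩ else 1

/-- The subword `w|B` of `w` on the positions in `B` (in increasing order). -/
def subword {k n : ℕ} (w : Fin n → Fin k) (B : Finset (Fin n)) : Fin B.card → Fin k :=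
  fun i => w (B.orderIsoOfFin rfl i).1

/-- The element `Y_{w;π} = ∏_{B block of π} Y_{w|B}`. -/
def Yprod {k n : ℕ} (w : Fin n → Fin k) (s : Setoid (Fin n)) : Yalg k :=
  ∏ B ∈ blocks s, Ygen ⟨B.card, subword w B⟩

/-- The comultiplication of `Y^(k)`:
`Δ(Y_w) = ∑_{π ∈ NC(n)} Y_{w;π} ⊗ Y_{w;K(π)}`. -/
def Δk (k : ℕ) : Yalg k →ₐ[ℂ] Yalg k ⊗[ℂ] Yalg k :=
  MvPolynomial.aeval fun q : {p : WordIdx k // 2 ≤ p.1} =>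
    ∑ π : NC q.1.1, Yprod q.1.2 π.1 ⊗ₜ[ℂ] Yprod q.1.2 (kreweras π.1)

/-- The counit of `Y^(k)`: `ε(Y_w) = 0` for `|w| ≥ 2`. -/
def εk (k : ℕ) : Yalg k →ₐ[ℂ] ℂ := MvPolynomial.aeval fun _ => 0

/-- The grading of `Y^(k)` in which `Y_w` is homogeneous of degree `|w| - 1`. -/
def Ycomp (k n : ℕ) : Submodule ℂ (Yalg k) :=
  MvPolynomial.weightedHomogeneousSubmodule ℂ (fun q : {p : WordIdx k // 2 ≤ p.1} => q.1.1 - 1) n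

/-! ### Convolution of linear functionals on a bialgebra -/

variable {A : Type} [CommRing A] [Algebra ℂ A]

/-- Convolution `ξη := mult ∘ (ξ ⊗ η) ∘ Δ` of two linear functionals. -/
def convF (D : A →ₐ[ℂ] A ⊗[ℂ] A) (ξ η : A →ₗ[ℂ] ℂ) : A →ₗ[ℂ] ℂ :=
  LinearMap.mul' ℂ ℂ ∘ₗ TensorProduct.map ξ η ∘ₗ D.toLinearMap

/-- Convolution powers `ξ^m`, with `ξ^0 := e` (the counit). -/
def convPowF (D : A →ₐ[ℂ] A ⊗[ℂ] A) (e ξ : A →ₗ[ℂ] ℂ) : ℕ → (A →ₗ[ℂ] ℂ)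
  | 0 => e
  | m + 1 => convF D (convPowF D e ξ m) ξ

/-- `(log η)(x) = -∑_{ℓ ≥ 1} (1/ℓ) (e - η)^ℓ (x)`, the logarithm of a functional `η`
with respect to convolution (`e` is the counit).  On each `x` the sum has only finitely
many nonzero terms, so the `tsum` below is the honest value. -/
def logFunF (D : A →ₐ[ℂ] A ⊗[ℂ] A) (e η : A →ₗ[ℂ] ℂ) (x : A) : ℂ :=
  -∑' ℓ : ℕ, (1 / ((ℓ : ℂ) + 1)) * convPowF D e (e - η) (ℓ + 1) x

/-! ### Distributions, R-transforms, free multiplicative convolution -/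

/-- A distribution (or a family of coefficients of a power series in `k` non-commuting
indeterminates), encoded by its values on all words. -/
abbrev Dist (k : ℕ) := WordIdx k → ℂ

/-- `μ ∈ G_k`: `μ(1) = 1` and `μ(X_i) = 1` for all `i`. -/
def InG {k : ℕ} (μ : Dist k) : Prop :=
  (∀ w : Fin 0 → Fin k, μ ⟨0, w⟩ = 1) ∧ (∀ w : Fin 1 → Fin k, μ ⟨1, w⟩ = 1)

/-- `Cf_{w;π}(f) = ∏_{B block of π} Cf_{w|B}(f)`, for a coefficient family `α`. -/
def cfPart {k n : ℕ} (α : Dist k) (w : Fin n → Fin k) (s : Setoid (Fin n)) : ℂ :=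
  ∏ B ∈ blocks s, α ⟨B.card, subword w B⟩

/-- `α` is (the coefficient family of) the R-transform of `μ`:
the moment–cumulant relations hold. -/
def IsRTransform {k : ℕ} (μ α : Dist k) : Prop :=
  (∀ w : Fin 0 → Fin k, α ⟨0, w⟩ = 0) ∧
  ∀ (n : ℕ) (w : Fin n → Fin k), 1 ≤ n → μ ⟨n, w⟩ = ∑ π : NC n, cfPart α w π.1

/-- `γ` is the R-transform of the free multiplicative convolution of distributions
with R-transforms `α` and `β`:
`Cf_w(R_{μ⊠ν}) = ∑_{π ∈ NC(n)} Cf_{w;π}(R_μ) Cf_{w;K(π)}(R_ν)`. -/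
def IsBoxtimes {k : ℕ} (α β γ : Dist k) : Prop :=
  ∀ (n : ℕ) (w : Fin n → Fin k), 1 ≤ n →
    γ ⟨n, w⟩ = ∑ π : NC n, cfPart α w π.1 * cfPart β w (kreweras π.1)

/-- The unit `μ_o` of `(G_k, ⊠)`: all moments equal to `1`. -/
def distUnit (k : ℕ) : Dist k := fun _ => 1

/-- The character `χ_μ` of `Y^(k)` associated to a distribution with R-transform `α`:
`χ_μ(Y_w) = Cf_w(R_μ)`. -/
def charOf {k : ℕ} (α : Dist k) : Yalg k →ₐ[ℂ] ℂ :=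
  MvPolynomial.aeval fun q => α q.1

/-- The generalized coefficient `Cf_w^(Γ)(f) = ∏_{j=1}^{ℓ} Cf_{w;K_{π_j}(π_{j-1})}(f)`
attached to a (multi-)chain `Γ = (π_0,…,π_{m+1})` in `NC(n)`. -/
def cfChain {k n : ℕ} (α : Dist k) (w : Fin n → Fin k) (m : ℕ)
    (c : Fin (m + 2) → Setoid (Fin n)) : ℂ :=
  ∏ j : Fin (m + 1), cfPart α w (relKreweras (c j.castSucc) (c j.succ))

/-- The `i`-th marginal coefficients: the free cumulants of the `i`-th marginal `μ_i`
are `Cf_{(i,…,i)}(R_μ)`. -/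
def margFam {k : ℕ} (α : Dist k) (i : Fin k) : Dist 1 := fun q => α ⟨q.1, fun _ => i⟩


/-! ### Iterated comultiplication -/

/-- The iterated tensor powers `Y^(k) ⊗ ⋯ ⊗ Y^(k)` (`m+1` factors), as objects of
`ModuleCat ℂ` so that the recursion carries its module structure. -/
def YpowM (k : ℕ) : ℕ → ModuleCat ℂ
  | 0 => ModuleCat.of ℂ (Yalg k)
  | m + 1 => ModuleCat.of ℂ (Yalg k ⊗[ℂ] YpowM k m)

/-- The iterated comultiplication: `Δiter k m = Δ^{m+1}` in the notation of the paper
(`Δiter k 0 = id`, `Δiter k (m+1) = (id ⊗ Δ^{m+1}) ∘ Δ`). -/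
def Δiter (k : ℕ) : ∀ m : ℕ, Yalg k →ₗ[ℂ] YpowM k m
  | 0 => LinearMap.id
  | m + 1 => TensorProduct.map LinearMap.id (Δiter k m) ∘ₗ (Δk k).toLinearMap

/-- The pure tensor `Y_{w;K_{π_1}(π_0)} ⊗ ⋯ ⊗ Y_{w;K_{π_{m+1}}(π_m)}` attached to a
multi-chain `(π_0, …, π_{m+1})`. -/
def chainTensor {k n : ℕ} (w : Fin n → Fin k) :
    ∀ m : ℕ, (Fin (m + 2) → Setoid (Fin n)) → YpowM k m
  | 0, c => Yprod w (relKreweras (c 0) (c 1))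
  | m + 1, c => Yprod w (relKreweras (c 0) (c 1)) ⊗ₜ[ℂ] chainTensor w m (fun i => c i.succ)


/-! ### One-variable power series tools -/

/-- The R-transform of a one-variable distribution, as a power series. -/
def Rser (α : Dist 1) : PowerSeries ℂ :=
  PowerSeries.mk fun m => if m = 0 then 0 else α ⟨m, fun _ => 0⟩

/-- Composition `f ∘ g` of formal power series (the honest composition whenever
`g` has vanishing constant term). -/
def psComp (f g : PowerSeries ℂ) : PowerSeries ℂ :=
  PowerSeries.mk fun m =>
    ∑ j ∈ Finset.range (m + 1), PowerSeries.coeff (R := ℂ) j f * PowerSeries.coeff (R := ℂ) m (g ^ j)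

/-- `S` is the S-transform of the distribution with R-transform `α`:
`S(z) = (1/z)·R^{⟨-1⟩}(z)`, i.e. `z·S(z)` is the compositional inverse of `R`. -/
def SChar (α : Dist 1) (S : PowerSeries ℂ) : Prop :=
  PowerSeries.constantCoeff (R := ℂ) S = 1 ∧
  psComp (Rser α) (PowerSeries.X * S) = PowerSeries.X ∧
  psComp (PowerSeries.X * S) (Rser α) = PowerSeries.X

/-- The formal logarithm `log f = -∑_{ℓ≥1} (1/ℓ)(1-f)^ℓ = ∑_{ℓ≥1} ((-1)^{ℓ+1}/ℓ)(f-1)^ℓ`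
of a power series (the honest logarithm whenever `f` has constant term 1). -/
def psLog {B : Type} [CommRing B] [Algebra ℂ B] (f : PowerSeries B) : PowerSeries B :=
  PowerSeries.mk fun m =>
    ∑ ℓ ∈ Finset.range (m + 1), ((-1 : ℂ) ^ (ℓ + 1) / ℓ) • PowerSeries.coeff (R := B) m ((f - 1) ^ ℓ)

/-- The coefficient-wise LS-transform of a one-variable distribution, as a power series. -/
def LSseries (α : Dist 1) : PowerSeries ℂ :=
  PowerSeries.mk fun n =>
    if 2 ≤ n then
      logFunF (Δk 1) (εk 1).toLinearMap (charOf α).toLinearMap (Ygen ⟨n, fun _ => 0⟩)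
    else 0

/-! ### The Hopf algebra `Sym` of symmetric functions -/

/-- `Sym`, realized as the free commutative algebra on the complete homogeneous
symmetric functions `h_1, h_2, …`. -/
abbrev SymA := MvPolynomial {m : ℕ // 1 ≤ m} ℂ

/-- The complete homogeneous symmetric function `h_m` (with `h_0 = 1`). -/
def Hgen (m : ℕ) : SymA := if h : 1 ≤ m then MvPolynomial.X ⟨m, h⟩ else 1

/-- The comultiplication of `Sym`: `Δ(h_n) = ∑_{i=0}^n h_i ⊗ h_{n-i}`. -/
def ΔSym : SymA →ₐ[ℂ] SymA ⊗[ℂ] SymA :=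
  MvPolynomial.aeval fun q : {m : ℕ // 1 ≤ m} =>
    ∑ i ∈ Finset.range (q.1 + 1), Hgen i ⊗ₜ[ℂ] Hgen (q.1 - i)

/-- The counit of `Sym`. -/
def εSym : SymA →ₐ[ℂ] ℂ := MvPolynomial.aeval fun _ => 0

/-- The generating series `h(z) = 1 + ∑ (-1)^n h_n z^n`. -/
def hSymSeries : PowerSeries SymA :=
  PowerSeries.mk fun m => if m = 0 then 1 else (-1 : SymA) ^ m * Hgen m

/-- The generating series `e(z) = 1 + ∑ e_n z^n = 1/h(z)`. -/
def eSymSeries : PowerSeries SymA := PowerSeries.invOfUnit hSymSeries 1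

/-- The elementary symmetric function `e_m`, defined through `e(z) = 1/h(z)`. -/
def eSym (m : ℕ) : SymA := PowerSeries.coeff (R := SymA) m eSymSeries

/-- The power sum symmetric function `p_m`, defined through
`log e(z) = ∑_{m≥1} ((-1)^{m+1}/m) p_m z^m`. -/
def pSym (m : ℕ) : SymA :=
  ((-1 : ℂ) ^ (m + 1) * m) • PowerSeries.coeff (R := SymA) m (psLog eSymSeries)

/-- The grading of `Sym` (`h_n` homogeneous of degree `n`). -/
def SymComp (n : ℕ) : Submodule ℂ SymA :=
  MvPolynomial.weightedHomogeneousSubmodule ℂ (fun q : {m : ℕ // 1 ≤ m} => q.1) n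

/-- The symmetric function `y_n = ∑_{π ∈ NC(n-1)} ∏_{B block of π} e_{|B|}`. -/
def ySym (n : ℕ) : SymA := ∑ π : NC (n - 1), ∏ B ∈ blocks π.1, eSym B.card

/-- The homomorphism `Φ : Y^(1) → Sym`, `Φ(Y_n) = y_n`. -/
def Phi : Yalg 1 →ₐ[ℂ] SymA := MvPolynomial.aeval fun q => ySym q.1.1

/-- The character `θ_μ` of `Sym` attached to a distribution with S-transform `S`:
`θ_μ(h_n) = (-1)^n β_n` where `S(z) = 1 + ∑ β_n z^n`. -/
def thetaOf (S : PowerSeries ℂ) : SymA →ₐ[ℂ] ℂ :=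
  MvPolynomial.aeval fun q : {m : ℕ // 1 ≤ m} =>
    (-1 : ℂ) ^ q.1 * PowerSeries.coeff (R := ℂ) q.1 S

/-- Infinitesimal characters of `Sym`. -/
def IsInfCharSym (ξ : SymA →ₗ[ℂ] ℂ) : Prop :=
  ∀ u v : SymA, ξ (u * v) = ξ u * εSym v + εSym u * ξ v

/-!
Both sides are characters of the polynomial algebra `Y^(1)`, so it suffices to compare them on
the generators `Y_{m+1}`. There `χ_μ` gives `α_{m+1}`, while `θ_μ ∘ Φ` gives
`∑_{π ∈ NC(m)} ∏_{B ∈ π} c_{|B|}`, where `c_k` are the coefficients of `E = 1/S`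
(because `θ_μ` maps `e(z) = 1/h(z)` to `1/S(z)`). This sum is the `m`-th moment `M_m` of a
distribution with free cumulants `c_k`, so the claim is `R(z) = z M(z)`.

The free moment–cumulant relation `M(z) = E(z M(z))` says that `F = z M(z)` satisfies
`F · S(F) = z`, i.e. `F` is a right compositional inverse of `z S(z)`; so is `R`, by definition
of the S-transform, and such an inverse is unique. For the relation itself, cut a non-crossing
partition of `{0, …, n}` at `p + 1`, the second element of the block of `0`: the points
`1, …, p` carry an arbitrary non-crossing partition, and the points `p + 1, …, n` one whose
first block is merged with that of `0`. Let `A_d(n)` be the sum over `NC(n)` in which the block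
of `0` is weighted by a separate sequence `d`; the cut shows
`A_d(n + 1) = ∑_{p + q = n} M_p A_{d(· + 1)}(q)`, hence `A_d(m) = [z^m] D(z M(z))` for the
generating series `D` of `d`, and `M_{m+1} = A_c(m + 1)`.
-/

section Blocks

variable {n : ℕ}

def blockOf (s : Setoid (Fin n)) (a : Fin n) : Finset (Fin n) :=
  Finset.univ.filter fun b => s.r a b

@[simp]
lemma mem_blockOf {s : Setoid (Fin n)} {a b : Fin n} : b ∈ blockOf s a ↔ s.r a b := by
  simp [blockOf]

def blockMins (s : Setoid (Fin n)) : Finset (Fin n) :=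
  Finset.univ.filter fun a => ∀ b, s.r a b → a ≤ b

@[simp]
lemma mem_blockMins {s : Setoid (Fin n)} {a : Fin n} :
    a ∈ blockMins s ↔ ∀ b, s.r a b → a ≤ b := by
  simp [blockMins]

lemma blocks_eq_image_blockMins (s : Setoid (Fin n)) :
    blocks s = (blockMins s).image (blockOf s) := by
  change Finset.univ.image (blockOf s) = _
  refine Finset.ext fun B => ⟨fun hB => ?_, fun hB => ?_⟩
  · obtain ⟨a, -, rfl⟩ := Finset.mem_image.1 hB
    let a₀ := (blockOf s a).min' ⟨a, mem_blockOf.2 (Setoid.refl' s a)⟩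
    have ha₀ : s.r a a₀ := mem_blockOf.1 (Finset.min'_mem _ _)
    refine Finset.mem_image.2 ⟨a₀, mem_blockMins.2 fun b hb => ?_, ?_⟩
    · exact Finset.min'_le _ _ (mem_blockOf.2 (Setoid.trans' s ha₀ hb))
    · ext b
      simp only [mem_blockOf]
      exact ⟨Setoid.trans' s ha₀, Setoid.trans' s (Setoid.symm' s ha₀)⟩
  · obtain ⟨a, -, rfl⟩ := Finset.mem_image.1 hB
    exact Finset.mem_image.2 ⟨a, Finset.mem_univ a, rfl⟩

lemma prod_blocks_eq_prod_blockMins {M : Type*} [CommMonoid M] (s : Setoid (Fin n))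
    (f : Finset (Fin n) → M) :
    ∏ B ∈ blocks s, f B = ∏ a ∈ blockMins s, f (blockOf s a) := by
  rw [blocks_eq_image_blockMins]
  refine Finset.prod_image fun a ha b hb hab => le_antisymm
    (mem_blockMins.1 ha b ?_) (mem_blockMins.1 hb a (Setoid.symm' s ?_))
  all_goals exact mem_blockOf.1 (hab ▸ mem_blockOf.2 (Setoid.refl' s b))

/-- The block of `0`, empty when `n = 0`. -/
def zeroBlock (s : Setoid (Fin n)) : Finset (Fin n) :=
  Finset.univ.filter fun b => ∃ a : Fin n, (a : ℕ) = 0 ∧ s.r a b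

@[simp]
lemma mem_zeroBlock {s : Setoid (Fin n)} {b : Fin n} :
    b ∈ zeroBlock s ↔ ∃ a : Fin n, (a : ℕ) = 0 ∧ s.r a b := by
  simp [zeroBlock]

lemma zeroBlock_eq_blockOf_zero {m : ℕ} (s : Setoid (Fin (m + 1))) :
    zeroBlock s = blockOf s 0 := by
  ext b
  rw [mem_zeroBlock, mem_blockOf]
  exact ⟨fun ⟨a, ha, hab⟩ => (Fin.ext ha : a = 0) ▸ hab, fun h => ⟨0, rfl, h⟩⟩

def markedWeight (c d : ℕ → ℂ) (s : Setoid (Fin n)) : ℂ :=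
  d (zeroBlock s).card *
    ∏ a ∈ (blockMins s).filter (fun a : Fin n => a.val ≠ 0), c (blockOf s a).card

end Blocks

section NCSums

/-- The moment of order `m` of a distribution with free cumulants `c`. -/
def ncSum (c : ℕ → ℂ) (m : ℕ) : ℂ := ∑ π : NC m, ∏ B ∈ blocks π.1, c B.card

def ncMarkedSum (c d : ℕ → ℂ) (m : ℕ) : ℂ := ∑ π : NC m, markedWeight c d π.1

instance : Unique (NC 0) where
  default := ncBot 0
  uniq _ := Subtype.ext (Setoid.ext fun a => a.elim0)

lemma ncSum_zero (c : ℕ → ℂ) : ncSum c 0 = 1 := by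
  simp [ncSum, blocks]

lemma ncMarkedSum_zero (c d : ℕ → ℂ) : ncMarkedSum c d 0 = d 0 := by
  simp [ncMarkedSum, markedWeight, zeroBlock, Finset.filter_false_of_mem]

lemma ncSum_succ (c : ℕ → ℂ) (m : ℕ) : ncSum c (m + 1) = ncMarkedSum c c (m + 1) := by
  refine Finset.sum_congr rfl fun π _ => ?_
  have h0 : (0 : Fin (m + 1)) ∈ blockMins π.1 := mem_blockMins.2 fun b _ => Fin.zero_le b
  rw [prod_blocks_eq_prod_blockMins, markedWeight, zeroBlock_eq_blockOf_zero,
    ← Finset.mul_prod_erase _ _ h0]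
  congr 2
  ext a
  rw [Finset.mem_erase, Finset.mem_filter, ← Fin.val_ne_iff, Fin.val_zero, and_comm]

end NCSums

section Comap

variable {m N : ℕ} {e : Fin m → Fin N} {π : Setoid (Fin N)}

lemma IsNC.comap (he : StrictMono e) (hπ : IsNC π) : IsNC (π.comap e) :=
  fun _ _ _ _ h₁ h₂ h₃ => hπ _ _ _ _ (he h₁) (he h₂) (he h₃)

lemma IsNC.rel_of_le {s : Setoid (Fin N)} (hs : IsNC s) {a b c d : Fin N}
    (hab : a ≤ b) (hbc : b < c) (hcd : c < d) (hac : s.r a c) (hbd : s.r b d) : s.r a b := by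
  rcases hab.lt_or_eq with hab | rfl
  · exact hs a b c d hab hbc hcd hac hbd
  · exact Setoid.refl' s a

lemma blockOf_eq_image_comap {i : Fin m}
    (hclosed : ∀ b, π.r (e i) b → b ∈ Set.range e) :
    blockOf π (e i) = (blockOf (π.comap e) i).image e := by
  ext b
  simp only [mem_blockOf, Finset.mem_image]
  refine ⟨fun hb => ?_, fun ⟨j, hj, hjb⟩ => hjb ▸ hj⟩
  obtain ⟨j, rfl⟩ := hclosed b hb
  exact ⟨j, hb, rfl⟩

lemma card_blockOf_comap (he : Function.Injective e) {i : Fin m}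
    (hclosed : ∀ b, π.r (e i) b → b ∈ Set.range e) :
    (blockOf π (e i)).card = (blockOf (π.comap e) i).card := by
  rw [blockOf_eq_image_comap hclosed, Finset.card_image_of_injective _ he]

lemma mem_blockMins_comap_iff (he : StrictMono e) {i : Fin m}
    (hclosed : ∀ b, π.r (e i) b → b ∈ Set.range e) :
    e i ∈ blockMins π ↔ i ∈ blockMins (π.comap e) := by
  simp only [mem_blockMins]
  refine ⟨fun h j hj => he.le_iff_le.1 (h _ hj), fun h b hb => ?_⟩
  obtain ⟨j, rfl⟩ := hclosed b hb
  exact he.monotone (h j hb)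

end Comap

section FirstReturn

variable {n p : ℕ}

lemma exists_firstReturn (π : Setoid (Fin (n + 1))) :
    ∃ k, k = n ∨ ∃ h : k + 1 < n + 1, π.r 0 ⟨k + 1, h⟩ :=
  ⟨n, Or.inl rfl⟩

/-- `firstReturn π + 1` is the second smallest element of the block of `0`, if there is one;
otherwise `firstReturn π = n`. -/
def firstReturn (π : Setoid (Fin (n + 1))) : ℕ :=
  Nat.find (exists_firstReturn π)

variable {π : Setoid (Fin (n + 1))}

lemma firstReturn_le (π : Setoid (Fin (n + 1))) : firstReturn π ≤ n :=
  Nat.find_min' _ (Or.inl rfl)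

lemma firstReturn_lt_of_rel_zero (hfib : firstReturn π = p) {b : Fin (n + 1)}
    (hb : (b : ℕ) ≠ 0) (h : π.r 0 b) : p < b := by
  have := Nat.find_min' (exists_firstReturn π) (m := b - 1)
    (Or.inr ⟨by omega, by convert h; omega⟩)
  rw [← hfib, firstReturn]
  omega

lemma rel_zero_firstReturn_succ (hfib : firstReturn π = p) (hpn : p < n) :
    π.r 0 ⟨p + 1, by omega⟩ := by
  subst hfib
  rcases Nat.find_spec (exists_firstReturn π) with hn | ⟨_, hr⟩
  · exact absurd hn (Nat.ne_of_lt hpn)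
  · exact hr

lemma firstReturn_eq (hp : p ≤ n) (hret : ∀ h : p < n, π.r 0 ⟨p + 1, by omega⟩)
    (hfirst : ∀ b : Fin (n + 1), (b : ℕ) ≠ 0 → π.r 0 b → p < b) :
    firstReturn π = p := by
  refine le_antisymm (Nat.find_min' _ ?_) ?_
  · rcases hp.lt_or_eq with h | h
    · exact Or.inr ⟨by omega, hret h⟩
    · exact Or.inl h
  · rcases (firstReturn_le π).lt_or_eq with h | h
    · have := hfirst _ (by simp) (rel_zero_firstReturn_succ rfl h)
      simp only at this
      omega
    · omega

lemma rel_mid_closed (hπ : IsNC π) (hfib : firstReturn π = p) {a b : Fin (n + 1)}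
    (ha : 0 < (a : ℕ) ∧ (a : ℕ) ≤ p) (hab : π.r a b) :
    0 < (b : ℕ) ∧ (b : ℕ) ≤ p := by
  have hb0 : (b : ℕ) ≠ 0 := fun hb0 => by
    have := firstReturn_lt_of_rel_zero hfib (by omega)
      (Setoid.symm' π ((Fin.ext hb0 : b = 0) ▸ hab))
    omega
  refine ⟨Nat.pos_of_ne_zero hb0, not_lt.1 fun hpb => ?_⟩
  have hret := rel_zero_firstReturn_succ hfib (by omega)
  have h0a : π.r 0 a := by
    rcases (Nat.succ_le_of_lt hpb).lt_or_eq with h | h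
    · exact hπ 0 a _ b (Fin.lt_def.2 ha.1) (Fin.lt_def.2 (by simp; omega)) (Fin.lt_def.2 h)
        hret hab
    · have hb : b = ⟨p + 1, by omega⟩ := Fin.ext h.symm
      exact Setoid.trans' π hret (Setoid.symm' π (hb ▸ hab))
  have := firstReturn_lt_of_rel_zero hfib (by omega) h0a
  omega

lemma rel_right_closed (hπ : IsNC π) (hfib : firstReturn π = p) {a b : Fin (n + 1)}
    (ha : p < a) (h0a : ¬ π.r 0 a) (hab : π.r a b) : p < b := by
  by_contra hbp
  by_cases hb0 : (b : ℕ) = 0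
  · exact h0a (Setoid.symm' π ((Fin.ext hb0 : b = 0) ▸ hab))
  · have := rel_mid_closed hπ hfib (b := a) ⟨by omega, by omega⟩ (Setoid.symm' π hab)
    omega

end FirstReturn

section Glue

variable {n p : ℕ}

def midEmb (hp : p ≤ n) (i : Fin p) : Fin (n + 1) := ⟨i + 1, by omega⟩

def rightEmb (n p : ℕ) (j : Fin (n - p)) : Fin (n + 1) := ⟨j + (p + 1), by omega⟩

@[simp]
lemma val_midEmb (hp : p ≤ n) (i : Fin p) : (midEmb hp i : ℕ) = i + 1 := rfl

@[simp]
lemma val_rightEmb (j : Fin (n - p)) : (rightEmb n p j : ℕ) = j + (p + 1) := rfl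

lemma midEmb_strictMono (hp : p ≤ n) : StrictMono (midEmb hp) := fun i j h => by
  rw [Fin.lt_def, val_midEmb, val_midEmb]
  exact Nat.succ_lt_succ h

lemma rightEmb_strictMono : StrictMono (rightEmb n p) := fun i j h => by
  rw [Fin.lt_def, val_rightEmb, val_rightEmb]
  exact Nat.add_lt_add_right h _

lemma mem_range_midEmb (hp : p ≤ n) {b : Fin (n + 1)} (hb : 0 < (b : ℕ) ∧ (b : ℕ) ≤ p) :
    b ∈ Set.range (midEmb hp) :=
  ⟨⟨b - 1, by omega⟩, Fin.ext (by simp; omega)⟩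

lemma mem_range_rightEmb {b : Fin (n + 1)} (hb : p < b) : b ∈ Set.range (rightEmb n p) :=
  ⟨⟨b - (p + 1), by omega⟩, Fin.ext (by simp; omega)⟩

/-- The label of `a` in the partition glued from `ρ` on `{1, …, p}` and `τ` on
`{p + 1, …, n}`. Since `0 - (p + 1) = 0` in `ℕ`, the element `0` gets the label of `p + 1`, so
it joins the first block of `τ` (and stays a singleton when `p = n`). -/
def glueLabel (ρ : Setoid (Fin p)) (τ : Setoid (Fin (n - p))) (a : Fin (n + 1)) :
    Quotient ρ ⊕ Option (Quotient τ) :=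
  if h : 0 < (a : ℕ) ∧ (a : ℕ) ≤ p then .inl (Quotient.mk ρ ⟨a - 1, by omega⟩)
  else .inr (if h' : (a : ℕ) - (p + 1) < n - p then some (Quotient.mk τ ⟨a - (p + 1), h'⟩)
    else none)

def glue (ρ : Setoid (Fin p)) (τ : Setoid (Fin (n - p))) : Setoid (Fin (n + 1)) :=
  Setoid.ker (glueLabel ρ τ)

variable {ρ : Setoid (Fin p)} {τ : Setoid (Fin (n - p))} {a b : Fin (n + 1)}

lemma glue_rel_of_mid (ha : 0 < (a : ℕ) ∧ (a : ℕ) ≤ p)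
    (hb : 0 < (b : ℕ) ∧ (b : ℕ) ≤ p) :
    (glue ρ τ).r a b ↔ ρ.r ⟨a - 1, by omega⟩ ⟨b - 1, by omega⟩ := by
  change glueLabel ρ τ a = glueLabel ρ τ b ↔ _
  rw [glueLabel, glueLabel, dif_pos ha, dif_pos hb, Sum.inl.injEq, Quotient.eq]

lemma not_glue_rel_of_mid (ha : 0 < (a : ℕ) ∧ (a : ℕ) ≤ p)
    (hb : ¬ (0 < (b : ℕ) ∧ (b : ℕ) ≤ p)) :
    ¬ (glue ρ τ).r a b := by
  change glueLabel ρ τ a ≠ glueLabel ρ τ b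
  rw [glueLabel, glueLabel, dif_pos ha, dif_neg hb]
  exact Sum.inl_ne_inr

lemma glue_rel_of_right (hpn : p < n) (ha : ¬ (0 < (a : ℕ) ∧ (a : ℕ) ≤ p))
    (hb : ¬ (0 < (b : ℕ) ∧ (b : ℕ) ≤ p)) :
    (glue ρ τ).r a b ↔ τ.r ⟨a - (p + 1), by omega⟩ ⟨b - (p + 1), by omega⟩ := by
  change glueLabel ρ τ a = glueLabel ρ τ b ↔ _
  rw [glueLabel, glueLabel, dif_neg ha, dif_neg hb, dif_pos (by omega), dif_pos (by omega),
    Sum.inr.injEq, Option.some.injEq, Quotient.eq]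

lemma comap_midEmb_glue (hp : p ≤ n) : (glue ρ τ).comap (midEmb hp) = ρ :=
  Setoid.ext fun i j => by
    change (glue ρ τ).r _ _ ↔ _
    rw [glue_rel_of_mid (by simp) (by simp)]
    simp

lemma comap_rightEmb_glue : (glue ρ τ).comap (rightEmb n p) = τ :=
  Setoid.ext fun i j => by
    change (glue ρ τ).r _ _ ↔ _
    rw [glue_rel_of_right (by have := i.2; omega) (by simp; omega) (by simp; omega)]
    simp

lemma firstReturn_glue (hp : p ≤ n) : firstReturn (glue ρ τ) = p := by
  refine firstReturn_eq hp (fun hpn => ?_) (fun b hb h => ?_)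
  · rw [glue_rel_of_right hpn (by simp) (by simp)]
    convert Setoid.refl' τ _ using 2
    simp
  · by_contra hbp
    exact not_glue_rel_of_mid (b := 0) ⟨by omega, by omega⟩ (by simp) (Setoid.symm' _ h)

lemma isNC_glue (hρ : IsNC ρ) (hτ : IsNC τ) : IsNC (glue ρ τ) := by
  intro a b c d hab hbc hcd hac hbd
  rw [Fin.lt_def] at hab hbc hcd
  by_cases ha : 0 < (a : ℕ) ∧ (a : ℕ) ≤ p
  · have hc : 0 < (c : ℕ) ∧ (c : ℕ) ≤ p := by
      by_contra hc
      exact not_glue_rel_of_mid ha hc hac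
    have hb : 0 < (b : ℕ) ∧ (b : ℕ) ≤ p := by omega
    have hd : 0 < (d : ℕ) ∧ (d : ℕ) ≤ p := by
      by_contra hd
      exact not_glue_rel_of_mid hb hd hbd
    rw [glue_rel_of_mid ha hc] at hac
    rw [glue_rel_of_mid hb hd] at hbd
    rw [glue_rel_of_mid ha hb]
    exact hρ _ _ _ _ (Fin.lt_def.2 (by simp; omega)) (Fin.lt_def.2 (by simp; omega))
      (Fin.lt_def.2 (by simp; omega)) hac hbd
  · have hc : ¬ (0 < (c : ℕ) ∧ (c : ℕ) ≤ p) := fun hc =>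
      not_glue_rel_of_mid hc ha (Setoid.symm' _ hac)
    have hd : ¬ (0 < (d : ℕ) ∧ (d : ℕ) ≤ p) := by omega
    have hb : ¬ (0 < (b : ℕ) ∧ (b : ℕ) ≤ p) := fun hb => not_glue_rel_of_mid hb hd hbd
    have hpn : p < n := by omega
    rw [glue_rel_of_right hpn ha hc] at hac
    rw [glue_rel_of_right hpn hb hd] at hbd
    rw [glue_rel_of_right hpn ha hb]
    exact hτ.rel_of_le (Fin.le_def.2 (by simp; omega)) (Fin.lt_def.2 (by simp; omega))
      (Fin.lt_def.2 (by simp; omega)) hac hbd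

end Glue

section Fiber

variable {n p : ℕ} {π : Setoid (Fin (n + 1))}

lemma rel_zero_rightEmb (hfib : firstReturn π = p) {j : Fin (n - p)} (hj : (j : ℕ) = 0) :
    π.r 0 (rightEmb n p j) := by
  have : rightEmb n p j = ⟨p + 1, by omega⟩ := Fin.ext (by simp [hj])
  exact this ▸ rel_zero_firstReturn_succ hfib (by omega)

lemma rel_rightEmb_sub (hfib : firstReturn π = p) (hpn : p < n) {a : Fin (n + 1)}
    (ha : ¬ (0 < (a : ℕ) ∧ (a : ℕ) ≤ p)) :
    π.r a (rightEmb n p ⟨a - (p + 1), by omega⟩) := by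
  by_cases ha0 : (a : ℕ) = 0
  · exact (Fin.ext ha0 : a = 0) ▸ rel_zero_rightEmb hfib (by simp)
  · convert Setoid.refl' π a
    ext
    simp
    omega

lemma glue_comap (hπ : IsNC π) (hfib : firstReturn π = p) (hp : p ≤ n) :
    glue (π.comap (midEmb hp)) (π.comap (rightEmb n p)) = π := by
  refine Setoid.ext fun a b => ?_
  by_cases ha : 0 < (a : ℕ) ∧ (a : ℕ) ≤ p <;>
    by_cases hb : 0 < (b : ℕ) ∧ (b : ℕ) ≤ p
  · rw [glue_rel_of_mid ha hb]
    change π.r (midEmb hp _) (midEmb hp _) ↔ _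
    rw [show midEmb hp ⟨a - 1, _⟩ = a from Fin.ext (by simp; omega),
      show midEmb hp ⟨b - 1, _⟩ = b from Fin.ext (by simp; omega)]
  · exact iff_of_false (not_glue_rel_of_mid ha hb) fun h => hb (rel_mid_closed hπ hfib ha h)
  · exact iff_of_false (fun h => not_glue_rel_of_mid hb ha (Setoid.symm' _ h))
      fun h => ha (rel_mid_closed hπ hfib hb (Setoid.symm' _ h))
  · rcases lt_or_ge p n with hpn | hpn
    · rw [glue_rel_of_right hpn ha hb]
      change π.r (rightEmb n p _) (rightEmb n p _) ↔ _
      have ha' := rel_rightEmb_sub hfib hpn ha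
      have hb' := rel_rightEmb_sub hfib hpn hb
      exact ⟨fun h => Setoid.trans' _ (Setoid.trans' _ ha' h) (Setoid.symm' _ hb'),
        fun h => Setoid.trans' _ (Setoid.trans' _ (Setoid.symm' _ ha') h) hb'⟩
    · obtain rfl : a = b := Fin.ext (by omega)
      exact iff_of_true (Setoid.refl' _ a) (Setoid.refl' π a)

lemma rel_midEmb_mem_range (hπ : IsNC π) (hfib : firstReturn π = p) (hp : p ≤ n) (i : Fin p)
    (b : Fin (n + 1)) (hb : π.r (midEmb hp i) b) : b ∈ Set.range (midEmb hp) :=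
  mem_range_midEmb hp (rel_mid_closed hπ hfib (by simp) hb)

lemma rel_rightEmb_mem_range (hπ : IsNC π) (hfib : firstReturn π = p) {j : Fin (n - p)}
    (h0 : ¬ π.r 0 (rightEmb n p j)) (b : Fin (n + 1)) (hb : π.r (rightEmb n p j) b) :
    b ∈ Set.range (rightEmb n p) :=
  mem_range_rightEmb (rel_right_closed hπ hfib (by simp; omega) h0 hb)

lemma not_rel_zero_rightEmb (hfib : firstReturn π = p) {j : Fin (n - p)}
    (hj : j ∈ blockMins (π.comap (rightEmb n p))) (hj0 : (j : ℕ) ≠ 0) :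
    ¬ π.r 0 (rightEmb n p j) := fun h => by
  have := mem_blockMins.1 hj ⟨0, by omega⟩
    (Setoid.trans' π (Setoid.symm' π h) (rel_zero_rightEmb hfib rfl))
  exact hj0 (Nat.le_zero.1 (Fin.le_def.1 this))

lemma card_zeroBlock_eq (hfib : firstReturn π = p) :
    (zeroBlock π).card = (zeroBlock (π.comap (rightEmb n p))).card + 1 := by
  have hsplit : blockOf π 0 =
      insert 0 ((zeroBlock (π.comap (rightEmb n p))).image (rightEmb n p)) := by
    ext b
    simp only [mem_blockOf, Finset.mem_insert, Finset.mem_image, mem_zeroBlock]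
    constructor
    · intro hb
      by_cases hb0 : (b : ℕ) = 0
      · exact Or.inl (Fin.ext hb0)
      · obtain ⟨j, rfl⟩ := mem_range_rightEmb (firstReturn_lt_of_rel_zero hfib hb0 hb)
        exact Or.inr ⟨j, ⟨⟨0, j.pos⟩, rfl,
          Setoid.trans' π (Setoid.symm' π (rel_zero_rightEmb hfib rfl)) hb⟩, rfl⟩
    · rintro (rfl | ⟨j, ⟨i, hi, hij⟩, rfl⟩)
      · exact Setoid.refl' π 0
      · exact Setoid.trans' π (rel_zero_rightEmb hfib hi) hij
  rw [zeroBlock_eq_blockOf_zero, hsplit, Finset.card_insert_of_notMem,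
    Finset.card_image_of_injective _ rightEmb_strictMono.injective]
  simp [Fin.ext_iff]

lemma midEmb_mem_blockMins_iff (hπ : IsNC π) (hfib : firstReturn π = p) (hp : p ≤ n)
    (i : Fin p) : midEmb hp i ∈ blockMins π ↔ i ∈ blockMins (π.comap (midEmb hp)) :=
  mem_blockMins_comap_iff (midEmb_strictMono hp) (rel_midEmb_mem_range hπ hfib hp i)

lemma rightEmb_mem_blockMins_iff (hπ : IsNC π) (hfib : firstReturn π = p) {j : Fin (n - p)}
    (hj0 : (j : ℕ) ≠ 0) :
    rightEmb n p j ∈ blockMins π ↔ j ∈ blockMins (π.comap (rightEmb n p)) := by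
  refine ⟨fun h => ?_, fun h => ?_⟩
  · have h0 : ¬ π.r 0 (rightEmb n p j) := fun h0 => by
      have := Fin.le_def.1 (mem_blockMins.1 h 0 (Setoid.symm' π h0))
      simp at this
    exact (mem_blockMins_comap_iff rightEmb_strictMono (rel_rightEmb_mem_range hπ hfib h0)).1 h
  · exact (mem_blockMins_comap_iff rightEmb_strictMono
      (rel_rightEmb_mem_range hπ hfib (not_rel_zero_rightEmb hfib h hj0))).2 h

lemma filter_blockMins_eq (hπ : IsNC π) (hfib : firstReturn π = p) (hp : p ≤ n) :
    (blockMins π).filter (fun a : Fin (n + 1) => a.val ≠ 0) =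
      (blockMins (π.comap (midEmb hp))).image (midEmb hp) ∪
        ((blockMins (π.comap (rightEmb n p))).filter (fun j : Fin (n - p) => j.val ≠ 0)).image
          (rightEmb n p) := by
  ext a
  simp only [Finset.mem_filter, Finset.mem_union, Finset.mem_image]
  rcases Nat.eq_zero_or_pos (a : ℕ) with ha0 | ha0
  · simp [ha0, Fin.ext_iff]
  rcases le_or_gt (a : ℕ) p with hap | hap
  · obtain ⟨i, rfl⟩ := mem_range_midEmb hp ⟨ha0, hap⟩
    have hright : ∀ j, rightEmb n p j ≠ midEmb hp i := fun j h => by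
      have := congrArg Fin.val h
      simp only [val_midEmb, val_rightEmb] at this
      omega
    simp only [midEmb_mem_blockMins_iff hπ hfib hp, (midEmb_strictMono hp).injective.eq_iff,
      exists_eq_right, hright, and_false, exists_false, or_false, val_midEmb]
    exact and_iff_left (Nat.succ_ne_zero _)
  · obtain ⟨j, rfl⟩ := mem_range_rightEmb hap
    have hmid : ∀ i, midEmb hp i ≠ rightEmb n p j := fun i h => by
      have := congrArg Fin.val h
      simp only [val_midEmb, val_rightEmb] at this
      omega
    simp only [rightEmb_strictMono.injective.eq_iff, exists_eq_right, hmid, and_false,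
      exists_false, false_or, val_rightEmb, ne_eq, Nat.add_eq_zero_iff, one_ne_zero,
      not_false_eq_true, and_true]
    by_cases hj0 : (j : ℕ) = 0
    · refine iff_of_false (fun h => ?_) fun h => h.2 hj0
      have := Fin.le_def.1 (mem_blockMins.1 h 0 (Setoid.symm' π (rel_zero_rightEmb hfib hj0)))
      simp at this
    · rw [rightEmb_mem_blockMins_iff hπ hfib hj0]
      exact (and_iff_left hj0).symm

lemma markedWeight_eq (hπ : IsNC π) (hfib : firstReturn π = p) (hp : p ≤ n)
    (c d : ℕ → ℂ) :
    markedWeight c d π =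
      (∏ i ∈ blockMins (π.comap (midEmb hp)), c (blockOf (π.comap (midEmb hp)) i).card) *
        markedWeight c (fun m => d (m + 1)) (π.comap (rightEmb n p)) := by
  have hdisj : Disjoint ((blockMins (π.comap (midEmb hp))).image (midEmb hp))
      (((blockMins (π.comap (rightEmb n p))).filter fun j : Fin (n - p) => j.val ≠ 0).image
        (rightEmb n p)) := by
    simp only [Finset.disjoint_left, Finset.mem_image]
    rintro _ ⟨i, -, rfl⟩ ⟨j, -, h⟩
    have := congrArg Fin.val h
    simp only [val_midEmb, val_rightEmb] at this
    omega
  rw [markedWeight, markedWeight, card_zeroBlock_eq hfib, filter_blockMins_eq hπ hfib hp,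
    Finset.prod_union hdisj, Finset.prod_image (midEmb_strictMono hp).injective.injOn,
    Finset.prod_image rightEmb_strictMono.injective.injOn]
  have hmid : ∀ i ∈ blockMins (π.comap (midEmb hp)),
      c (blockOf π (midEmb hp i)).card = c (blockOf (π.comap (midEmb hp)) i).card := fun i _ => by
    rw [card_blockOf_comap (midEmb_strictMono hp).injective (rel_midEmb_mem_range hπ hfib hp i)]
  have hright : ∀ j ∈ (blockMins (π.comap (rightEmb n p))).filter (fun j => j.val ≠ 0),
      c (blockOf π (rightEmb n p j)).card = c (blockOf (π.comap (rightEmb n p)) j).card :=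
    fun j hj => by
      obtain ⟨hj, hj0⟩ := Finset.mem_filter.1 hj
      rw [card_blockOf_comap rightEmb_strictMono.injective
        (rel_rightEmb_mem_range hπ hfib (not_rel_zero_rightEmb hfib hj hj0))]
  rw [Finset.prod_congr rfl hmid, Finset.prod_congr rfl hright]
  ring

end Fiber

section Recursion

open Finset

lemma sum_markedWeight_firstReturn_eq (c d : ℕ → ℂ) {n p : ℕ} (hp : p ≤ n) :
    ∑ π ∈ univ.filter (fun π : NC (n + 1) => firstReturn π.1 = p), markedWeight c d π.1 =
      ncSum c p * ncMarkedSum c (fun m => d (m + 1)) (n - p) := by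
  simp only [ncSum, prod_blocks_eq_prod_blockMins, ncMarkedSum, Fintype.sum_mul_sum,
    ← sum_product', univ_product_univ]
  refine sum_bij'
    (fun π _ => (⟨π.1.comap (midEmb hp), π.2.comap (midEmb_strictMono hp)⟩,
      ⟨π.1.comap (rightEmb n p), π.2.comap rightEmb_strictMono⟩))
    (fun ρτ _ => ⟨glue ρτ.1.1 ρτ.2.1, isNC_glue ρτ.1.2 ρτ.2.2⟩)
    (fun _ _ => mem_univ _)
    (fun _ _ => mem_filter.2 ⟨mem_univ _, firstReturn_glue hp⟩)
    (fun π hπ => Subtype.ext (glue_comap π.2 (mem_filter.1 hπ).2 hp))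
    (fun _ _ => Prod.ext (Subtype.ext (comap_midEmb_glue hp)) (Subtype.ext comap_rightEmb_glue))
    (fun π hπ => markedWeight_eq π.2 (mem_filter.1 hπ).2 hp c d)

lemma ncMarkedSum_succ (c d : ℕ → ℂ) (n : ℕ) :
    ncMarkedSum c d (n + 1) = ∑ x ∈ antidiagonal n,
      ncSum c x.1 * ncMarkedSum c (fun m => d (m + 1)) x.2 := by
  rw [ncMarkedSum, ← sum_fiberwise_of_maps_to (g := fun π : NC (n + 1) => firstReturn π.1)
    (t := range (n + 1)) fun π _ => mem_range.2 (Nat.lt_succ_of_le (firstReturn_le _)),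
    Nat.sum_antidiagonal_eq_sum_range_succ_mk]
  exact sum_congr rfl fun p hp =>
    sum_markedWeight_firstReturn_eq c d (Nat.lt_succ_iff.1 (mem_range.1 hp))

end Recursion

section PowerSeriesSubst

open PowerSeries

lemma psComp_eq_subst (f : PowerSeries ℂ) {g : PowerSeries ℂ} (hg : constantCoeff g = 0) :
    psComp f g = subst g f := by
  ext m
  rw [psComp, coeff_mk, coeff_subst' (HasSubst.of_constantCoeff_zero' hg)]
  refine (finsum_eq_sum_of_support_subset _ fun j hj => ?_).symm
  rw [Finset.coe_range, Set.mem_Iio, Nat.lt_succ_iff]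
  by_contra hmj
  refine hj ?_
  change coeff j f • coeff m (g ^ j) = 0
  rw [coeff_of_lt_order m, smul_zero]
  exact lt_of_lt_of_le (by exact_mod_cast not_le.1 hmj)
    (le_order_pow_of_constantCoeff_eq_zero j hg)

lemma eq_substInvOfIsUnit_of_subst_eq_X {R : Type*} [CommRing R] {P F : PowerSeries R}
    (hP : constantCoeff P = 0) (hP' : IsUnit (coeff 1 P)) (hF : HasSubst F) (h : subst F P = X) :
    F = P.substInvOfIsUnit hP' := by
  calc F = subst F (X : PowerSeries R) := (subst_X hF).symm
    _ = subst F (subst P (P.substInvOfIsUnit hP')) := by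
      rw [subst_substInvOfIsUnit_left P hP hP']
    _ = P.substInvOfIsUnit hP' := by
      rw [subst_comp_subst_apply (HasSubst.of_constantCoeff_zero' hP) hF, h, X_subst]

lemma subst_mk_eq_C_add_mul_subst {R : Type*} [CommRing R] (d : ℕ → R) {F : PowerSeries R}
    (hF : HasSubst F) :
    subst F (mk d) = C (d 0) + F * subst F (mk fun m => d (m + 1)) := by
  conv_lhs => rw [eq_X_mul_shift_add_const (mk d)]
  rw [subst_add hF, subst_mul hF, subst_X hF, subst_C]
  simp only [coeff_mk, constantCoeff_mk, add_comm]
  rfl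

end PowerSeriesSubst

section MomentSeries

open PowerSeries

lemma ncMarkedSum_eq_coeff_subst (c d : ℕ → ℂ) (m : ℕ) :
    ncMarkedSum c d m = coeff m (subst (X * mk (ncSum c)) (mk d)) := by
  have hF : HasSubst (X * mk (ncSum c) : PowerSeries ℂ) :=
    HasSubst.of_constantCoeff_zero' (by simp)
  induction m using Nat.strong_induction_on generalizing d with
  | _ m ih =>
  rw [subst_mk_eq_C_add_mul_subst d hF]
  rcases m with - | n
  · simp [ncMarkedSum_zero]
  · rw [ncMarkedSum_succ, map_add, coeff_C, if_neg n.succ_ne_zero, zero_add, mul_assoc,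
      coeff_succ_X_mul, coeff_mul]
    refine Finset.sum_congr rfl fun x hx => ?_
    rw [coeff_mk, ih x.2 (by have := Finset.HasAntidiagonal.mem_antidiagonal.1 hx; omega)]

lemma mk_ncSum_eq_subst (c : ℕ → ℂ) (hc : c 0 = 1) :
    mk (ncSum c) = subst (X * mk (ncSum c)) (mk c) := by
  ext m
  rw [coeff_mk, ← ncMarkedSum_eq_coeff_subst]
  rcases m with - | m
  · rw [ncSum_zero, ncMarkedSum_zero, hc]
  · exact ncSum_succ c m

end MomentSeries

section Transforms

open PowerSeries

/-- Both sides are right compositional inverses of `z S(z)`. -/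
lemma Rser_eq_X_mul_mk_ncSum {α : Dist 1} {S : PowerSeries ℂ} (hS : SChar α S) :
    Rser α = X * mk (ncSum fun k => coeff k (invOfUnit S 1)) := by
  set E := invOfUnit S 1
  set F := X * mk (ncSum fun k => coeff k E)
  have hF : HasSubst F := HasSubst.of_constantCoeff_zero' (by simp [F])
  have hR : constantCoeff (Rser α) = 0 := by simp [Rser]
  have hP : constantCoeff (X * S) = 0 := by simp
  have hP' : IsUnit (coeff 1 (X * S)) := by simp [hS.1]
  have hRinv : subst (Rser α) (X * S) = X := by
    rw [← psComp_eq_subst _ hR]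
    exact hS.2.2
  have hFinv : subst F (X * S) = X := by
    have hmom : mk (ncSum fun k => coeff k E) = subst F E := by
      conv_rhs => rw [show E = mk fun k => coeff k E by ext; simp]
      exact mk_ncSum_eq_subst _ (by simp [E])
    calc subst F (X * S) = X * subst F (E * S) := by
          rw [subst_mul hF, subst_mul hF, subst_X hF, ← hmom, mul_assoc]
      _ = X := by
          rw [invOfUnit_mul S 1 (by rw [hS.1]; rfl), ← coe_substAlgHom hF, map_one, mul_one]
  rw [eq_substInvOfIsUnit_of_subst_eq_X hP hP' (HasSubst.of_constantCoeff_zero' hR) hRinv,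
    ← eq_substInvOfIsUnit_of_subst_eq_X hP hP' hF hFinv]

lemma thetaOf_eSym {S : PowerSeries ℂ} (hS : constantCoeff S = 1) (m : ℕ) :
    thetaOf S (eSym m) = coeff m (invOfUnit S 1) := by
  set θ := (thetaOf S).toRingHom
  have hh : map θ hSymSeries = S := by
    ext k
    rcases k with - | k
    · simp [hSymSeries, hS]
    · have hH : thetaOf S (Hgen (k + 1)) = (-1) ^ (k + 1) * coeff (k + 1) S := by
        rw [Hgen, dif_pos (Nat.le_add_left 1 k)]
        exact MvPolynomial.aeval_X _ _
      simp [θ, hSymSeries, hH, ← mul_assoc, ← mul_pow]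
  have he : map θ eSymSeries * S = 1 := by
    rw [← hh, ← map_mul, mul_comm, eSymSeries, mul_invOfUnit _ _ (by simp [hSymSeries]),
      map_one]
  rw [eSym, ← left_inv_eq_right_inv he (mul_invOfUnit S 1 (by rw [hS]; rfl)), coeff_map]
  rfl

end Transforms

theorem char_eq_theta_comp_Phi_general (α : Dist 1) (S : PowerSeries ℂ) (hS : SChar α S) :
    charOf α = (thetaOf S).comp Phi := by
  refine MvPolynomial.algHom_ext fun ⟨⟨m, w⟩, hm⟩ => ?_
  obtain rfl : w = fun _ => 0 := Subsingleton.elim _ _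
  obtain ⟨k, rfl⟩ : ∃ k, m = k + 1 := ⟨m - 1, by simp only at hm; omega⟩
  calc charOf α (MvPolynomial.X ⟨⟨k + 1, _⟩, hm⟩)
        = PowerSeries.coeff (k + 1) (Rser α) := by simp [charOf, Rser]
    _ = ncSum (fun j => PowerSeries.coeff j (PowerSeries.invOfUnit S 1)) k := by
        rw [Rser_eq_X_mul_mk_ncSum hS, PowerSeries.coeff_succ_X_mul, PowerSeries.coeff_mk]
    _ = (thetaOf S).comp Phi (MvPolynomial.X ⟨⟨k + 1, _⟩, hm⟩) := by
        simp [Phi, ySym, ncSum, thetaOf_eSym hS.1]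

/-- Proposition 6.9.  For every `μ ∈ G_1`, `χ_μ = θ_μ ∘ Φ`, where
`Φ : Y^(1) → Sym` is the unital algebra homomorphism with `Φ(Y_n) = y_n`. -/
theorem char_eq_theta_comp_Phi (μ α : Dist 1) (hμ : InG μ) (hα : IsRTransform μ α)
    (S : PowerSeries ℂ) (hS : SChar α S) :
    charOf α = (thetaOf S).comp Phi :=
  char_eq_theta_comp_Phi_general α S hS

end FreeProb

end
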